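/- Let A be a finite-dimensional algebra over an algebraically closed field. If A admits an infinite Hom-orthogonal set of finite-dimensional modules whose k-dimensions are all bounded above by some integer D, then there exists a positive integer d ≤ D such that A admits infinitely many pairwise non-isomorphic bricks of k-dimension d. -/

import Mathlib

universe u v

open Module

/-- A finite-dimensional left module over the `k`-algebra `A`. -/
structure FDMod (k A : Type u) [Field k] [Ring A] [Algebra k A] : Type (u + 1) where
  carrier : Type u
  [addCommGroup : AddCommGroup carrier]
  [moduleK : Module k carrier]
  [moduleA : Module A carrier]
  [tower : IsScalarTower k A carrier]
  [fd : FiniteDimensional k carrier]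

attribute [instance] FDMod.addCommGroup FDMod.moduleK FDMod.moduleA FDMod.tower FDMod.fd

variable {k A : Type u} [Field k] [Ring A] [Algebra k A]

/-- `M` is a brick: `M ≠ 0` and every `A`-endomorphism of `M` is a `k`-scalar,
i.e. `End_A(M) ≅ k`. -/
def FDMod.IsBrick (M : FDMod k A) : Prop :=
  Nontrivial M.carrier ∧ ∀ f : M.carrier →ₗ[A] M.carrier, ∃ c : k, ∀ x : M.carrier, f x = c • x

/-- `M` and `N` are Hom-orthogonal: `Hom_A(M,N) = 0` and `Hom_A(N,M) = 0`. -/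
def FDMod.HomOrth (M N : FDMod k A) : Prop :=
  (∀ f : M.carrier →ₗ[A] N.carrier, f = 0) ∧ (∀ f : N.carrier →ₗ[A] M.carrier, f = 0)

/-- `M` and `N` are isomorphic as `A`-modules. -/
def FDMod.Iso (M N : FDMod k A) : Prop :=
  Nonempty (M.carrier ≃ₗ[A] N.carrier)

/-- A family of modules forms a Hom-orthogonal set: the modules are nonzero,
pairwise non-isomorphic and pairwise Hom-orthogonal. -/
def HomOrthFamily {I : Type v} (X : I → FDMod k A) : Prop :=
  (∀ i, Nontrivial (X i).carrier) ∧
  (∀ i j, i ≠ j → ¬(X i).Iso (X j)) ∧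
  (∀ i j, i ≠ j → (X i).HomOrth (X j))

/-- `A` is brick-finite: there are only finitely many isomorphism classes of bricks. -/
def BrickFinite (k A : Type u) [Field k] [Ring A] [Algebra k A] : Prop :=
  ∃ (m : ℕ) (f : Fin m → FDMod k A), ∀ N : FDMod k A, N.IsBrick → ∃ i, N.Iso (f i)

/-- `A` has rank `n`: there are exactly `n` isomorphism classes of simple modules. -/
def HasRank (k A : Type u) [Field k] [Ring A] [Algebra k A] (n : ℕ) : Prop :=
  ∃ S : Fin n → FDMod k A,
    (∀ i, IsSimpleModule A (S i).carrier) ∧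
    (∀ i j, i ≠ j → ¬(S i).Iso (S j)) ∧
    (∀ T : FDMod k A, IsSimpleModule A T.carrier → ∃ i, T.Iso (S i))

/-!
A nonzero module `M` that is not a brick has an endomorphism `f` that is not a scalar;
for an eigenvalue `c` of `f`, the endomorphism `f - c` is nonzero and not surjective, so
its image is a nonzero module of smaller dimension that is both a quotient and a submodule
of `M`. Iterating gives a brick `B(M)` that is a quotient and a submodule of `M`, and
these properties embed `Hom(B(M), B(N))` into `Hom(M, N)`. Hence the bricks `B(X i)`
of a Hom-orthogonal family are again Hom-orthogonal, so pairwise non-isomorphic, and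
their dimensions lie in `[1, D]`; by pigeonhole infinitely many share one dimension.
-/

lemma LinearMap.eq_zero_of_surjective_of_injective {R M N P Q : Type*} [Ring R]
    [AddCommGroup M] [AddCommGroup N] [AddCommGroup P] [AddCommGroup Q]
    [Module R M] [Module R N] [Module R P] [Module R Q]
    (hMQ : ∀ f : M →ₗ[R] Q, f = 0) {π : M →ₗ[R] P} (hπ : Function.Surjective π)
    {ι : N →ₗ[R] Q} (hι : Function.Injective ι) (f : P →ₗ[R] N) : f = 0 := by
  ext x
  obtain ⟨y, rfl⟩ := hπ x
  apply hι
  simpa using LinearMap.congr_fun (hMQ (ι ∘ₗ f ∘ₗ π)) y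

lemma LinearEquiv.isEmpty_of_forall_eq_zero {R M N : Type*} [Ring R]
    [AddCommGroup M] [AddCommGroup N] [Module R M] [Module R N] [Nontrivial M]
    (h : ∀ f : M →ₗ[R] N, f = 0) : IsEmpty (M ≃ₗ[R] N) := by
  refine ⟨fun e => ?_⟩
  obtain ⟨x, hx⟩ := exists_ne (0 : M)
  exact hx (e.injective (by simpa using LinearMap.congr_fun (h e.toLinearMap) x))

lemma exists_ne_zero_not_surjective_of_ne_smul_id [IsAlgClosed k] {M : Type*} [AddCommGroup M]
    [Module k M] [Module A M] [IsScalarTower k A M] [FiniteDimensional k M] [Nontrivial M]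
    {f : M →ₗ[A] M} (hf : ∀ c : k, ∃ x, f x ≠ c • x) :
    ∃ g : M →ₗ[A] M, g ≠ 0 ∧ ¬Function.Surjective g := by
  obtain ⟨c, hc⟩ := Module.End.exists_eigenvalue (f.restrictScalars k)
  obtain ⟨x, hx⟩ := hc.exists_hasEigenvector
  refine ⟨f - c • LinearMap.id, fun h0 => ?_, fun hsurj => ?_⟩
  · obtain ⟨y, hy⟩ := hf c
    exact hy (sub_eq_zero.mp (LinearMap.congr_fun h0 y))
  · -- `f - c` kills the eigenvector `x`, so it is not injective, hence not surjective.
    have hinj : Function.Injective ((f - c • LinearMap.id).restrictScalars k) :=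
      LinearMap.injective_iff_surjective.mpr hsurj
    refine hx.2 (hinj ?_)
    simpa [sub_eq_zero] using hx.apply_eq_smul

def FDMod.range {M : FDMod k A} (g : M.carrier →ₗ[A] M.carrier) : FDMod k A where
  carrier := LinearMap.range g
  fd := inferInstanceAs (FiniteDimensional k ((LinearMap.range g).restrictScalars k))

theorem FDMod.exists_brick_quotient_submodule [IsAlgClosed k] (M : FDMod k A)
    [Nontrivial M.carrier] :
    ∃ (B : FDMod k A) (π : M.carrier →ₗ[A] B.carrier) (ι : B.carrier →ₗ[A] M.carrier),
      B.IsBrick ∧ Function.Surjective π ∧ Function.Injective ι := by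
  induction hn : finrank k M.carrier using Nat.strong_induction_on generalizing M with
  | _ n ih =>
  by_cases hbrick : ∀ f : M.carrier →ₗ[A] M.carrier, ∃ c : k, ∀ x, f x = c • x
  · exact ⟨M, LinearMap.id, LinearMap.id, ⟨inferInstance, hbrick⟩, Function.surjective_id,
      Function.injective_id⟩
  push Not at hbrick
  obtain ⟨f, hf⟩ := hbrick
  obtain ⟨g, hg0, hg⟩ := exists_ne_zero_not_surjective_of_ne_smul_id hf
  have hlt : finrank k (FDMod.range g).carrier < n := by
    rw [← hn]
    refine Submodule.finrank_lt (s := (LinearMap.range g).restrictScalars k) ?_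
    simpa [LinearMap.range_eq_top] using hg
  have : Nontrivial (FDMod.range g).carrier :=
    Submodule.nontrivial_iff_ne_bot.mpr (mt LinearMap.range_eq_bot.mp hg0)
  obtain ⟨B, π, ι, hB, hπ, hι⟩ := ih _ hlt (FDMod.range g) rfl
  exact ⟨B, π ∘ₗ g.rangeRestrict, (LinearMap.range g).subtype ∘ₗ ι, hB,
    hπ.comp g.surjective_rangeRestrict, Subtype.val_injective.comp hι⟩

lemma Infinite.exists_natEmbedding_const_of_le {I : Type*} [Infinite I] (d : I → ℕ) (D : ℕ)
    (hd : ∀ i, d i ≤ D) : ∃ n, ∃ e : ℕ ↪ I, ∀ m, d (e m) = n := by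
  obtain ⟨n, hn⟩ := Finite.exists_infinite_fiber (Set.codRestrict d (Set.Iic D) hd)
  let e := Infinite.natEmbedding (Set.codRestrict d (Set.Iic D) hd ⁻¹' {n})
  exact ⟨n, e.trans (Function.Embedding.subtype _), fun m => congrArg Subtype.val (e m).2⟩

theorem stmt12_general {k A : Type u} [Field k] [IsAlgClosed k] [Ring A] [Algebra k A]
    (D : ℕ) {I : Type v} [Infinite I]
    (X : I → FDMod k A) (hX : HomOrthFamily X)
    (hdim : ∀ i, finrank k (X i).carrier ≤ D) :
    ∃ d : ℕ, 0 < d ∧ d ≤ D ∧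
      ∃ (J : Type u) (B : J → FDMod k A), Infinite J ∧
        (∀ j, (B j).IsBrick) ∧ (∀ i j, i ≠ j → ¬(B i).Iso (B j)) ∧
        (∀ j, finrank k (B j).carrier = d) := by
  obtain ⟨hnt, -, horth⟩ := hX
  choose B π ι hB hπ hι using fun i =>
    have := hnt i; FDMod.exists_brick_quotient_submodule (X i)
  have hBorth : ∀ i j, i ≠ j → ∀ f : (B i).carrier →ₗ[A] (B j).carrier, f = 0 :=
    fun i j hij => LinearMap.eq_zero_of_surjective_of_injective (horth i j hij).1 (hπ i) (hι j)
  have hBpos : ∀ i, 0 < finrank k (B i).carrier := fun i =>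
    have := (hB i).1; finrank_pos
  have hBle : ∀ i, finrank k (B i).carrier ≤ D := fun i =>
    (LinearMap.finrank_le_finrank_of_injective (f := (ι i).restrictScalars k) (hι i)).trans
      (hdim i)
  obtain ⟨d, e, he⟩ := Infinite.exists_natEmbedding_const_of_le _ D hBle
  refine ⟨d, he 0 ▸ hBpos _, he 0 ▸ hBle _, ULift.{u} ℕ, fun m => B (e m.down), inferInstance,
    fun m => hB _, fun m m' hmm' ⟨iso⟩ => ?_, fun m => he m.down⟩
  have : Nontrivial (B (e m.down)).carrier := (hB _).1
  exact (LinearEquiv.isEmpty_of_forall_eq_zero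
    (hBorth _ _ (e.injective.ne (ULift.down_injective.ne hmm')))).false iso

/-- If `A` admits an infinite Hom-orthogonal set of
finite-dimensional modules whose `k`-dimensions are all bounded by `D`, then there
is a positive integer `d ≤ D` such that `A` admits infinitely many pairwise
non-isomorphic bricks of `k`-dimension `d`. -/
theorem stmt12 {k A : Type u} [Field k] [IsAlgClosed k] [Ring A] [Algebra k A]
    [FiniteDimensional k A] (D : ℕ) {I : Type v} [Infinite I]
    (X : I → FDMod k A) (hX : HomOrthFamily X)
    (hdim : ∀ i, finrank k (X i).carrier ≤ D) :
    ∃ d : ℕ, 0 < d ∧ d ≤ D ∧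
      ∃ (J : Type u) (B : J → FDMod k A), Infinite J ∧
        (∀ j, (B j).IsBrick) ∧ (∀ i j, i ≠ j → ¬(B i).Iso (B j)) ∧
        (∀ j, finrank k (B j).carrier = d) :=
  stmt12_general D X hX hdim
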